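/- arXiv:1403.8042 — 2 statements merged into one kernel-verified Lean document; each statement's English description precedes it below -/
import Mathlib

section
/- Let X and Y be independent exponentially distributed random variables with means Ω_X > 0 and Ω_Y > 0, and let δ1, δ2, x0, y0 > 0 with δ2·y0 ≤ δ1·x0. Define P_{R,st}(x,y) = max{δ1/y, δ2/x} for x ≥ x0 and y ≥ y0, and P_{R,st}(x,y) = 0 otherwise. Then the maximum average relay output power equals E[P_{R,st}(X,Y)] = (δ1/Ω_Y)·e^{−x0/Ω_X}·[E1(y0/Ω_Y) − E1(δ1·x0/(δ2·Ω_Y))] + (δ1/Ω_Y + δ2/Ω_X)·E1(x0/Ω_X + δ1·x0/(δ2·Ω_Y)), where E1(z) = ∫_z^{∞}(e^{−t}/t) dt. -/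
/-!
Condition on `X = x ≥ x0`. As a function of `y`, `max (δ1 / y) (δ2 / x)` equals `δ1 / y` up
to the crossing point `y = δ1 x / δ2` and `δ2 / x` beyond it; the hypothesis `δ2 y0 ≤ δ1 x0`
puts the crossing point above `y0` for every such `x`. Against the exponential density of `Y`
the first piece integrates to a difference of `E1` values and the second to a tail
probability. Integrating the result against the density of `X`, the only non-elementary term
is `∫ e^{-a x} E1(c x)`, which integration by parts (with `E1'(z) = -e^{-z}/z`) reduces to
`E1((a + c) x0)`.
-/

open MeasureTheory ProbabilityTheory

/-- The exponential integral `E1(z) = ∫_z^∞ e^{-t}/t dt`. -/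
noncomputable def expInt (z : ℝ) : ℝ := ∫ t in Set.Ioi z, Real.exp (-t) / t

open Set Real Filter Topology

lemma integrableOn_mul_exp_neg_mul_Ioi {k : ℝ} (hk : 0 < k) (s : ℝ) :
    IntegrableOn (fun x => k * exp (-(k * x))) (Ioi s) := by
  have h := (exp_neg_integrableOn_Ioi s hk).const_mul k
  simp only [neg_mul] at h ⊢
  exact h

lemma setIntegral_mul_exp_neg_mul_Ioi {k : ℝ} (hk : 0 < k) (s : ℝ) :
    ∫ x in Ioi s, k * exp (-(k * x)) = exp (-(k * s)) := by
  rw [integral_const_mul]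
  simp only [← neg_mul]
  rw [integral_exp_mul_Ioi (neg_neg_iff_pos.2 hk)]
  field_simp

lemma integrableOn_exp_neg_mul_div_Ioi {k s : ℝ} (hk : 0 < k) (hs : 0 < s) :
    IntegrableOn (fun x => exp (-(k * x)) / x) (Ioi s) := by
  refine ((integrableOn_mul_exp_neg_mul_Ioi hk s).div_const (k * s)).mono'
    (by fun_prop : Measurable fun x => exp (-(k * x)) / x).aestronglyMeasurable ?_
  filter_upwards [ae_restrict_mem measurableSet_Ioi] with x (hx : s < x)
  rw [norm_div, norm_of_nonneg (exp_pos _).le, norm_of_nonneg (hs.trans hx).le,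
    mul_div_mul_left _ _ hk.ne']
  exact div_le_div_of_nonneg_left (exp_pos _).le hs hx.le

lemma integrableOn_exp_neg_div_Ioi {s : ℝ} (hs : 0 < s) :
    IntegrableOn (fun t => exp (-t) / t) (Ioi s) := by
  simpa using integrableOn_exp_neg_mul_div_Ioi one_pos hs

lemma expInt_nonneg {s : ℝ} (hs : 0 ≤ s) : 0 ≤ expInt s :=
  setIntegral_nonneg measurableSet_Ioi fun _ ht => div_nonneg (exp_pos _).le (hs.trans ht.le)

lemma expInt_le_exp_neg_div {s : ℝ} (hs : 0 < s) : expInt s ≤ exp (-s) / s := by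
  calc expInt s ≤ ∫ t in Ioi s, exp (-t) / s := by
        refine setIntegral_mono_on (integrableOn_exp_neg_div_Ioi hs) ?_ measurableSet_Ioi
          fun t ht => div_le_div_of_nonneg_left (exp_pos _).le hs (le_of_lt ht)
        have h := (integrableOn_mul_exp_neg_mul_Ioi one_pos s).div_const s
        simp only [one_mul] at h
        exact h
    _ = exp (-s) / s := by rw [integral_div, integral_exp_neg_Ioi]

lemma expInt_antitoneOn : AntitoneOn expInt (Ioi 0) := fun s (hs : 0 < s) _ _ hsu =>
  setIntegral_mono_set (integrableOn_exp_neg_div_Ioi hs)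
    ((ae_restrict_mem measurableSet_Ioi).mono fun _ ht =>
      div_nonneg (exp_pos _).le (hs.trans ht).le)
    (Ioi_subset_Ioi hsu).eventuallyLE

lemma tendsto_expInt_atTop : Tendsto expInt atTop (𝓝 0) := by
  have hbound : Tendsto (fun s => exp (-s) / s) atTop (𝓝 0) := by
    simpa [div_eq_mul_inv] using tendsto_exp_neg_atTop_nhds_zero.mul tendsto_inv_atTop_zero
  refine squeeze_zero' ?_ ?_ hbound
  · filter_upwards [eventually_ge_atTop 0] with s hs using expInt_nonneg hs
  · filter_upwards [eventually_gt_atTop 0] with s hs using expInt_le_exp_neg_div hs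

lemma hasDerivAt_expInt {z : ℝ} (hz : 0 < z) : HasDerivAt expInt (-(exp (-z) / z)) z := by
  have hs : 0 < z / 2 := half_pos hz
  have hmeas : Measurable fun t : ℝ => exp (-t) / t := by fun_prop
  have hFTC : HasDerivAt (fun w => ∫ t in z / 2..w, exp (-t) / t) (exp (-z) / z) z :=
    intervalIntegral.integral_hasDerivAt_right
      ((intervalIntegrable_iff_integrableOn_Ioc_of_le (half_lt_self hz).le).2
        ((integrableOn_exp_neg_div_Ioi hs).mono_set Ioc_subset_Ioi_self))
      hmeas.aestronglyMeasurable.stronglyMeasurableAtFilter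
      (by fun_prop (disch := exact hz.ne'))
  refine (hFTC.const_sub (expInt (z / 2))).congr_of_eventuallyEq ?_
  filter_upwards [Ioi_mem_nhds (half_lt_self hz)] with w (hw : z / 2 < w)
  rw [← intervalIntegral.integral_Ioi_sub_Ioi (integrableOn_exp_neg_div_Ioi hs) hw.le, expInt,
    expInt, sub_sub_cancel]

lemma setIntegral_exp_neg_mul_div_Ioi {k s : ℝ} (hk : 0 < k) (hs : 0 < s) :
    ∫ x in Ioi s, exp (-(k * x)) / x = expInt (k * s) := by
  calc ∫ x in Ioi s, exp (-(k * x)) / x = ∫ x in Ioi s, k * (exp (-(k * x)) / (k * x)) :=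
        setIntegral_congr_fun measurableSet_Ioi fun x (hx : s < x) => by
          field_simp [(hs.trans hx).ne']
    _ = expInt (k * s) := by
      rw [integral_const_mul, integral_comp_mul_left_Ioi (fun t => exp (-t) / t) s hk,
        smul_eq_mul, mul_inv_cancel_left₀ hk.ne', expInt]

lemma intervalIntegral_exp_neg_mul_div {k s u : ℝ} (hk : 0 < k) (hs : 0 < s) (hsu : s ≤ u) :
    ∫ y in s..u, exp (-(k * y)) / y = expInt (k * s) - expInt (k * u) := by
  rw [← intervalIntegral.integral_Ioi_sub_Ioi (integrableOn_exp_neg_mul_div_Ioi hk hs) hsu,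
    setIntegral_exp_neg_mul_div_Ioi hk hs, setIntegral_exp_neg_mul_div_Ioi hk (hs.trans_le hsu)]

lemma setIntegral_mul_exp_neg_mul_max_div_Ioi {r a b s : ℝ} (hr : 0 < r) (hb : 0 < b) (hs : 0 < s)
    (hsab : s ≤ a / b) :
    ∫ y in Ioi s, r * exp (-(r * y)) * max (a / y) b
      = a * r * (expInt (r * s) - expInt (r * (a / b))) + b * exp (-(r * (a / b))) := by
  set M := a / b
  have hMpos : 0 < M := hs.trans_le hsab
  have hlow : EqOn (fun y => r * exp (-(r * y)) * max (a / y) b)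
      (fun y => a * r * (exp (-(r * y)) / y)) (uIcc s M) := by
    intro y hy
    rw [uIcc_of_le hsab] at hy
    have hy0 : 0 < y := hs.trans_le hy.1
    dsimp only
    rw [max_eq_left ((le_div_iff₀ hy0).2 ((le_div_iff₀' hb).1 hy.2))]
    field_simp
  have hhigh : EqOn (fun y => r * exp (-(r * y)) * max (a / y) b)
      (fun y => b * (r * exp (-(r * y)))) (Ioi M) := by
    intro y (hy : M < y)
    have hy0 : 0 < y := hMpos.trans hy
    dsimp only
    rw [max_eq_right ((div_le_iff₀ hy0).2 ((div_lt_iff₀' hb).1 hy).le)]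
    ring
  have hint_low : IntervalIntegrable (fun y => r * exp (-(r * y)) * max (a / y) b) volume s M := by
    refine ContinuousOn.intervalIntegrable (ContinuousOn.mul (by fun_prop)
      (ContinuousOn.sup (continuousOn_const.div continuousOn_id fun y hy => ?_) continuousOn_const))
    rw [uIcc_of_le hsab] at hy
    exact (hs.trans_le hy.1).ne'
  have hint_high : IntegrableOn (fun y => r * exp (-(r * y)) * max (a / y) b) (Ioi M) :=
    IntegrableOn.congr_fun ((integrableOn_mul_exp_neg_mul_Ioi hr M).const_mul b) hhigh.symm
      measurableSet_Ioi
  rw [← intervalIntegral.integral_interval_add_Ioi' hint_low hint_high,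
    intervalIntegral.integral_congr hlow, setIntegral_congr_fun measurableSet_Ioi hhigh,
    intervalIntegral.integral_const_mul, intervalIntegral_exp_neg_mul_div hr hs hsab,
    integral_const_mul, setIntegral_mul_exp_neg_mul_Ioi hr]

lemma integrableOn_mul_exp_neg_mul_mul_expInt_Ioi {a c s : ℝ} (ha : 0 < a) (hc : 0 < c)
    (hs : 0 < s) : IntegrableOn (fun x => a * exp (-(a * x)) * expInt (c * x)) (Ioi s) := by
  have hcont : ContinuousOn (fun x => a * exp (-(a * x)) * expInt (c * x)) (Ioi s) :=
    (by fun_prop : Continuous fun x => a * exp (-(a * x))).continuousOn.mul fun x (hx : s < x) =>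
      ((hasDerivAt_expInt (mul_pos hc (hs.trans hx))).continuousAt.comp
        (continuous_const_mul c).continuousAt).continuousWithinAt
  refine Integrable.mono' ((integrableOn_mul_exp_neg_mul_Ioi ha s).mul_const (expInt (c * s)))
    (hcont.aestronglyMeasurable measurableSet_Ioi) ?_
  filter_upwards [ae_restrict_mem measurableSet_Ioi] with x (hx : s < x)
  have hcx : 0 < c * x := mul_pos hc (hs.trans hx)
  rw [norm_of_nonneg (by have := expInt_nonneg hcx.le; positivity)]
  exact mul_le_mul_of_nonneg_left
    (expInt_antitoneOn (mul_pos hc hs) hcx (mul_le_mul_of_nonneg_left hx.le hc.le)) (by positivity)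

lemma setIntegral_mul_exp_neg_mul_mul_expInt_Ioi {a c s : ℝ} (ha : 0 < a) (hc : 0 < c)
    (hs : 0 < s) :
    ∫ x in Ioi s, a * exp (-(a * x)) * expInt (c * x)
      = exp (-(a * s)) * expInt (c * s) - expInt ((a + c) * s) := by
  have hac : 0 < a + c := add_pos ha hc
  have hderiv : ∀ x ∈ Ici s, HasDerivAt (fun x => -(exp (-(a * x)) * expInt (c * x)))
      (a * exp (-(a * x)) * expInt (c * x) + exp (-((a + c) * x)) / x) x := by
    intro x (hx : s ≤ x)
    have hx0 : 0 < x := hs.trans_le hx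
    have hexp : HasDerivAt (fun x => exp (-(a * x))) (-(exp (-(a * x)) * a)) x := by
      simpa using ((hasDerivAt_id x).const_mul a).neg.exp
    have hE1 := (hasDerivAt_expInt (mul_pos hc hx0)).comp x ((hasDerivAt_id x).const_mul c)
    refine (hexp.mul hE1).neg.congr_deriv ?_
    rw [Function.comp_apply, show -((a + c) * x) = -(a * x) + -(c * x) by ring, exp_add]
    field_simp
    ring
  have hlim : Tendsto (fun x => -(exp (-(a * x)) * expInt (c * x))) atTop (𝓝 0) := by
    simpa using ((tendsto_exp_neg_atTop_nhds_zero.comp (tendsto_id.const_mul_atTop ha)).mul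
      (tendsto_expInt_atTop.comp (tendsto_id.const_mul_atTop hc))).neg
  have h := integral_Ioi_of_hasDerivAt_of_tendsto' hderiv
    ((integrableOn_mul_exp_neg_mul_mul_expInt_Ioi ha hc hs).add
      (integrableOn_exp_neg_mul_div_Ioi hac hs)) hlim
  rw [integral_add (integrableOn_mul_exp_neg_mul_mul_expInt_Ioi ha hc hs)
    (integrableOn_exp_neg_mul_div_Ioi hac hs), setIntegral_exp_neg_mul_div_Ioi hac hs] at h
  linarith

lemma setIntegral_mul_exp_neg_mul_mul_sub_expInt_add_div_Ioi {a c s : ℝ} (ha : 0 < a)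
    (hc : 0 < c) (hs : 0 < s) (A B C : ℝ) :
    ∫ x in Ioi s, a * exp (-(a * x)) * (B * (A - expInt (c * x)) + C / x * exp (-(c * x)))
      = B * exp (-(a * s)) * (A - expInt (c * s)) + (B + a * C) * expInt ((a + c) * s) := by
  have hac : 0 < a + c := add_pos ha hc
  have hsplit : EqOn
      (fun x => a * exp (-(a * x)) * (B * (A - expInt (c * x)) + C / x * exp (-(c * x))))
      (fun x => (B * A) * (a * exp (-(a * x))) - B * (a * exp (-(a * x)) * expInt (c * x))
        + a * C * (exp (-((a + c) * x)) / x)) (Ioi s) := by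
    intro x _
    dsimp only
    rw [add_mul, neg_add, exp_add]
    ring
  have h1 := (integrableOn_mul_exp_neg_mul_Ioi ha s).const_mul (B * A)
  have h2 := (integrableOn_mul_exp_neg_mul_mul_expInt_Ioi ha hc hs).const_mul B
  have h3 := (integrableOn_exp_neg_mul_div_Ioi hac hs).const_mul (a * C)
  rw [setIntegral_congr_fun measurableSet_Ioi hsplit, integral_add ?_ h3,
    integral_sub h1 h2, integral_const_mul (B * A), integral_const_mul B,
    integral_const_mul (a * C),
    setIntegral_mul_exp_neg_mul_Ioi ha, setIntegral_mul_exp_neg_mul_mul_expInt_Ioi ha hc hs,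
    setIntegral_exp_neg_mul_div_Ioi hac hs]
  · ring
  · exact h1.sub h2

lemma integral_ite_le_expMeasure {r s : ℝ} (hr : 0 < r) (hs : 0 ≤ s) (g : ℝ → ℝ) :
    ∫ x, (if s ≤ x then g x else 0) ∂expMeasure r
      = ∫ x in Ioi s, r * exp (-(r * x)) * g x := by
  have hdens : ∀ x, (exponentialPDF r x).toReal = exponentialPDFReal r x := fun x =>
    ENNReal.toReal_ofReal (exponentialPDFReal_nonneg hr x)
  have hind : (fun x => (exponentialPDF r x).toReal • if s ≤ x then g x else 0)
      = (Ici s).indicator fun x => r * exp (-(r * x)) * g x := by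
    ext x
    by_cases hx : s ≤ x
    · rw [indicator_of_mem (mem_Ici.2 hx), if_pos hx, hdens, exponentialPDFReal, gammaPDFReal]
      simp [hs.trans hx]
    · rw [indicator_of_notMem (mt mem_Ici.1 hx), if_neg hx, smul_zero]
  rw [show expMeasure r = volume.withDensity (exponentialPDF r) from rfl,
    integral_withDensity_eq_integral_toReal_smul (f := exponentialPDF r)
      (measurable_exponentialPDFReal r).ennreal_ofReal,
    hind, integral_indicator measurableSet_Ici, integral_Ici_eq_integral_Ioi]
  exact ae_of_all _ fun _ => ENNReal.ofReal_lt_top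

/-- The allocation `P_{R,st}`. -/
noncomputable def minRelayPower (δ1 δ2 x0 y0 x y : ℝ) : ℝ :=
  if x0 ≤ x ∧ y0 ≤ y then max (δ1 / y) (δ2 / x) else 0

lemma measurable_minRelayPower (δ1 δ2 x0 y0 : ℝ) :
    Measurable fun p : ℝ × ℝ => minRelayPower δ1 δ2 x0 y0 p.1 p.2 :=
  Measurable.ite ((measurableSet_le measurable_const measurable_fst).inter
      (measurableSet_le measurable_const measurable_snd))
    ((measurable_const.div measurable_snd).max (measurable_const.div measurable_fst))
    measurable_const

lemma abs_minRelayPower_le {δ1 δ2 x0 y0 : ℝ} (hδ1 : 0 ≤ δ1) (hδ2 : 0 ≤ δ2)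
    (hx0 : 0 < x0) (hy0 : 0 < y0) (x y : ℝ) :
    |minRelayPower δ1 δ2 x0 y0 x y| ≤ δ1 / y0 + δ2 / x0 := by
  have hδ1y0 : 0 ≤ δ1 / y0 := div_nonneg hδ1 hy0.le
  have hδ2x0 : 0 ≤ δ2 / x0 := div_nonneg hδ2 hx0.le
  unfold minRelayPower
  split_ifs with h
  · have hy : δ1 / y ≤ δ1 / y0 := div_le_div_of_nonneg_left hδ1 hy0 h.2
    have hx : δ2 / x ≤ δ2 / x0 := div_le_div_of_nonneg_left hδ2 hx0 h.1
    rw [abs_of_nonneg ((div_nonneg hδ1 (hy0.le.trans h.2)).trans (le_max_left _ _))]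
    exact max_le (by linarith) (by linarith)
  · simpa using add_nonneg hδ1y0 hδ2x0

lemma integral_minRelayPower_expMeasure_snd {r δ1 δ2 x0 y0 : ℝ} (hr : 0 < r) (hδ1 : 0 ≤ δ1)
    (hδ2 : 0 < δ2) (hx0 : 0 < x0) (hy0 : 0 < y0) (hreg : δ2 * y0 ≤ δ1 * x0) (x : ℝ) :
    ∫ y, minRelayPower δ1 δ2 x0 y0 x y ∂expMeasure r
      = if x0 ≤ x then δ1 * r * (expInt (r * y0) - expInt (r * δ1 / δ2 * x))
          + δ2 / x * exp (-(r * δ1 / δ2 * x)) else 0 := by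
  split_ifs with hx
  · have hx' : 0 < x := hx0.trans_le hx
    have hthreshold : r * (δ1 / (δ2 / x)) = r * δ1 / δ2 * x := by field_simp
    have hsab : y0 ≤ δ1 / (δ2 / x) := by
      rw [div_div_eq_mul_div, le_div_iff₀ hδ2]
      nlinarith
    simp only [minRelayPower, hx, true_and]
    rw [integral_ite_le_expMeasure hr hy0.le,
      setIntegral_mul_exp_neg_mul_max_div_Ioi hr (div_pos hδ2 hx') hy0 hsab, hthreshold]
  · simp [minRelayPower, hx]

lemma integral_minRelayPower_expMeasure_prod {rX rY δ1 δ2 x0 y0 : ℝ} (hrX : 0 < rX)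
    (hrY : 0 < rY) (hδ1 : 0 < δ1) (hδ2 : 0 < δ2) (hx0 : 0 < x0) (hy0 : 0 < y0)
    (hreg : δ2 * y0 ≤ δ1 * x0) :
    ∫ p, minRelayPower δ1 δ2 x0 y0 p.1 p.2 ∂(expMeasure rX).prod (expMeasure rY)
      = δ1 * rY * exp (-(rX * x0)) * (expInt (rY * y0) - expInt (rY * δ1 / δ2 * x0))
        + (δ1 * rY + rX * δ2) * expInt ((rX + rY * δ1 / δ2) * x0) := by
  have := isProbabilityMeasure_expMeasure hrX
  have := isProbabilityMeasure_expMeasure hrY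
  have hint : Integrable (fun p : ℝ × ℝ => minRelayPower δ1 δ2 x0 y0 p.1 p.2)
      ((expMeasure rX).prod (expMeasure rY)) :=
    (integrable_const (δ1 / y0 + δ2 / x0)).mono'
      (measurable_minRelayPower δ1 δ2 x0 y0).aestronglyMeasurable
      (ae_of_all _ fun p => abs_minRelayPower_le hδ1.le hδ2.le hx0 hy0 p.1 p.2)
  rw [integral_prod _ hint]
  simp only [integral_minRelayPower_expMeasure_snd hrY hδ1.le hδ2 hx0 hy0 hreg]
  rw [integral_ite_le_expMeasure hrX hx0.le,
    setIntegral_mul_exp_neg_mul_mul_sub_expInt_add_div_Ioi hrX (by positivity) hx0]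

/-- maximum average relay output power of the untruncated minimum short-term
allocation `P_{R,st}` in the regime `δ2 y0 ≤ δ1 x0`. -/
theorem stmt_10 {Ωsp : Type*} [MeasurableSpace Ωsp] (μ : Measure Ωsp)
    [IsProbabilityMeasure μ]
    (X Y : Ωsp → ℝ) (hX : Measurable X) (hY : Measurable Y)
    (hindep : IndepFun X Y μ)
    (ΩX ΩY δ1 δ2 x0 y0 : ℝ)
    (hΩX : 0 < ΩX) (hΩY : 0 < ΩY) (hδ1 : 0 < δ1) (hδ2 : 0 < δ2)
    (hx0 : 0 < x0) (hy0 : 0 < y0)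
    (hreg : δ2 * y0 ≤ δ1 * x0)
    (hXdist : Measure.map X μ = expMeasure (1 / ΩX))
    (hYdist : Measure.map Y μ = expMeasure (1 / ΩY))
    (PRst : ℝ → ℝ → ℝ)
    (hPRst : ∀ x y, PRst x y =
      if x0 ≤ x ∧ y0 ≤ y then max (δ1 / y) (δ2 / x) else 0) :
    ∫ ω, PRst (X ω) (Y ω) ∂μ =
      (δ1 / ΩY) * Real.exp (-x0 / ΩX) *
        (expInt (y0 / ΩY) - expInt (δ1 * x0 / (δ2 * ΩY)))
      + (δ1 / ΩY + δ2 / ΩX) * expInt (x0 / ΩX + δ1 * x0 / (δ2 * ΩY)) := by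
  have hjoint :
      μ.map (fun ω => (X ω, Y ω)) = (expMeasure (1 / ΩX)).prod (expMeasure (1 / ΩY)) := by
    rw [← hXdist, ← hYdist]
    exact (indepFun_iff_map_prod_eq_prod_map_map hX.aemeasurable hY.aemeasurable).1 hindep
  have hPRst' : PRst = minRelayPower δ1 δ2 x0 y0 := funext₂ hPRst
  calc ∫ ω, PRst (X ω) (Y ω) ∂μ
      = ∫ p, minRelayPower δ1 δ2 x0 y0 p.1 p.2 ∂μ.map (fun ω => (X ω, Y ω)) := by
        rw [integral_map (hX.aemeasurable.prodMk hY.aemeasurable)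
          (measurable_minRelayPower δ1 δ2 x0 y0).aestronglyMeasurable, hPRst']
    _ = _ := by
        rw [hjoint, integral_minRelayPower_expMeasure_prod (by positivity) (by positivity) hδ1 hδ2
          hx0 hy0 hreg]
        ring_nf
end

section
/- Let X and Y be independent exponentially distributed random variables with means Ω_X > 0 and Ω_Y > 0, let δ1, δ2, x0, y0, ρ > 0 with δ2·y0 > δ1·x0 and ρ ≥ δ1/y0, and set λ1 = max{x0, δ2/ρ} and λ2 = max{y0, δ1/ρ}. Then the system outage probability, i.e., the probability of the complement of the event {X ≥ x0, Y ≥ y0, max{δ1/Y, δ2/X} ≤ ρ}, equals 1 − e^{−y0/Ω_Y}·e^{−λ1/Ω_X} − e^{−λ2·(1/Ω_Y + δ2/(δ1·Ω_X))} + (δ1·Ω_X/(δ1·Ω_X + δ2·Ω_Y))·e^{−y0·(1/Ω_Y + δ2/(δ1·Ω_X))} + (δ2·Ω_Y/(δ1·Ω_X + δ2·Ω_Y))·e^{−λ2·(1/Ω_Y + δ2/(δ1·Ω_X))}. -/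
/-!
In this regime `δ1 / ρ ≤ y0`, so `λ2 = y0` and the two weighted exponentials sum to the
`-λ2` exponential: the closed form collapses to `1 - e^{-y0/ΩY} e^{-λ1/ΩX}`. Indeed, once
`Y ≥ y0` the relay constraint `δ1 / Y ≤ ρ` holds automatically, and `δ2 / X ≤ ρ` means
`X ≥ δ2 / ρ`, so the non-outage event is the rectangle `{X ≥ λ1} ∩ {Y ≥ y0}`, whose
probability factors by independence into two exponential tails.
-/

open MeasureTheory ProbabilityTheory Set

lemma expMeasure_Ici {r a : ℝ} (hr : 0 < r) (ha : 0 ≤ a) :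
    expMeasure r (Ici a) = ENNReal.ofReal (Real.exp (-(r * a))) := by
  have := isProbabilityMeasure_expMeasure hr
  have : NullSingletonClass (expMeasure r) := by unfold expMeasure gammaMeasure; infer_instance
  rw [← measure_congr Ioi_ae_eq_Ici, ← compl_Iic, prob_compl_eq_one_sub measurableSet_Iic,
    ← ofReal_cdf, cdf_expMeasure_eq hr, if_pos ha, ← ENNReal.ofReal_one,
    ← ENNReal.ofReal_sub _ (sub_nonneg.2 (Real.exp_le_one_iff.2 (by nlinarith))),
    sub_sub_cancel]

lemma measure_preimage_Ici_of_map_eq_expMeasure {Ω : Type*} [MeasurableSpace Ω]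
    {μ : Measure Ω} {X : Ω → ℝ} (hX : Measurable X) {m a : ℝ} (hm : 0 < m) (ha : 0 ≤ a)
    (hXdist : μ.map X = expMeasure (1 / m)) :
    μ (X ⁻¹' Ici a) = ENNReal.ofReal (Real.exp (-a / m)) := by
  rw [← Measure.map_apply hX measurableSet_Ici, hXdist, expMeasure_Ici (by positivity) ha]
  ring_nf

lemma nonOutage_iff {x0 y0 ρ δ1 δ2 x y : ℝ} (hx0 : 0 < x0) (hy0 : 0 < y0) (hρ : 0 < ρ)
    (hδ1 : 0 ≤ δ1) (hρge : δ1 / y0 ≤ ρ) :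
    (x0 ≤ x ∧ y0 ≤ y ∧ max (δ1 / y) (δ2 / x) ≤ ρ) ↔ (max x0 (δ2 / ρ) ≤ x ∧ y0 ≤ y) := by
  simp only [max_le_iff]
  constructor
  · rintro ⟨hx, hy, -, hδ2x⟩
    exact ⟨⟨hx, (div_le_comm₀ (hx0.trans_le hx) hρ).1 hδ2x⟩, hy⟩
  · rintro ⟨⟨hx, hδ2x⟩, hy⟩
    exact ⟨hx, hy, (div_le_div_of_nonneg_left hδ1 hy0 hy).trans hρge,
      (div_le_comm₀ (hx0.trans_le hx) hρ).2 hδ2x⟩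

theorem stmt_14_general {Ωsp : Type*} [MeasurableSpace Ωsp] (μ : Measure Ωsp)
    [IsProbabilityMeasure μ]
    (X Y : Ωsp → ℝ) (hX : Measurable X) (hY : Measurable Y)
    (hindep : IndepFun X Y μ)
    (ΩX ΩY δ1 δ2 x0 y0 ρ : ℝ)
    (hΩX : 0 < ΩX) (hΩY : 0 < ΩY) (hδ1 : 0 < δ1) (hδ2 : 0 < δ2)
    (hx0 : 0 < x0) (hy0 : 0 < y0) (hρ : 0 < ρ)
    (hρge : δ1 / y0 ≤ ρ)
    (hXdist : Measure.map X μ = expMeasure (1 / ΩX))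
    (hYdist : Measure.map Y μ = expMeasure (1 / ΩY))
    (lam1 lam2 : ℝ) (hlam1 : lam1 = max x0 (δ2 / ρ)) (hlam2 : lam2 = max y0 (δ1 / ρ)) :
    μ {ω | x0 ≤ X ω ∧ y0 ≤ Y ω ∧ max (δ1 / Y ω) (δ2 / X ω) ≤ ρ}ᶜ =
      ENNReal.ofReal (1
        - Real.exp (-y0 / ΩY) * Real.exp (-lam1 / ΩX)
        - Real.exp (-lam2 * (1 / ΩY + δ2 / (δ1 * ΩX)))
        + (δ1 * ΩX / (δ1 * ΩX + δ2 * ΩY)) * Real.exp (-y0 * (1 / ΩY + δ2 / (δ1 * ΩX)))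
        + (δ2 * ΩY / (δ1 * ΩX + δ2 * ΩY)) *
            Real.exp (-lam2 * (1 / ΩY + δ2 / (δ1 * ΩX)))) := by
  have hlam2y0 : lam2 = y0 := hlam2 ▸ max_eq_left ((div_le_comm₀ hy0 hρ).1 hρge)
  have hlam1_nonneg : 0 ≤ lam1 := hx0.le.trans (hlam1 ▸ le_max_left _ _)
  have hevent : {ω | x0 ≤ X ω ∧ y0 ≤ Y ω ∧ max (δ1 / Y ω) (δ2 / X ω) ≤ ρ} =
      X ⁻¹' Ici lam1 ∩ Y ⁻¹' Ici y0 := by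
    ext ω
    simpa only [hlam1, mem_ofPred_eq, mem_inter_iff, mem_preimage, mem_Ici] using
      nonOutage_iff hx0 hy0 hρ hδ1.le hρge
  have hweights : δ1 * ΩX / (δ1 * ΩX + δ2 * ΩY) + δ2 * ΩY / (δ1 * ΩX + δ2 * ΩY) = 1 := by
    rw [← add_div, div_self (by positivity)]
  rw [hevent, measure_compl ((hX measurableSet_Ici).inter (hY measurableSet_Ici))
      (measure_ne_top _ _), measure_univ,
    hindep.measure_inter_preimage_eq_mul _ _ measurableSet_Ici measurableSet_Ici,
    measure_preimage_Ici_of_map_eq_expMeasure hX hΩX hlam1_nonneg hXdist,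
    measure_preimage_Ici_of_map_eq_expMeasure hY hΩY hy0.le hYdist,
    ← ENNReal.ofReal_mul (Real.exp_nonneg _), ← ENNReal.ofReal_one,
    ← ENNReal.ofReal_sub _ (by positivity), hlam2y0]
  congr 1
  linear_combination -Real.exp (-y0 * (1 / ΩY + δ2 / (δ1 * ΩX))) * hweights

/-- closed-form system outage probability for the regime
`δ2 y0 > δ1 x0`, `ρ ≥ δ1/y0`, with `λ1 = max x0 (δ2/ρ)`, `λ2 = max y0 (δ1/ρ)`. -/
theorem stmt_14 {Ωsp : Type*} [MeasurableSpace Ωsp] (μ : Measure Ωsp)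
    [IsProbabilityMeasure μ]
    (X Y : Ωsp → ℝ) (hX : Measurable X) (hY : Measurable Y)
    (hindep : IndepFun X Y μ)
    (ΩX ΩY δ1 δ2 x0 y0 ρ : ℝ)
    (hΩX : 0 < ΩX) (hΩY : 0 < ΩY) (hδ1 : 0 < δ1) (hδ2 : 0 < δ2)
    (hx0 : 0 < x0) (hy0 : 0 < y0) (hρ : 0 < ρ)
    (hreg : δ1 * x0 < δ2 * y0) (hρge : δ1 / y0 ≤ ρ)
    (hXdist : Measure.map X μ = expMeasure (1 / ΩX))
    (hYdist : Measure.map Y μ = expMeasure (1 / ΩY))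
    (lam1 lam2 : ℝ) (hlam1 : lam1 = max x0 (δ2 / ρ)) (hlam2 : lam2 = max y0 (δ1 / ρ)) :
    μ {ω | x0 ≤ X ω ∧ y0 ≤ Y ω ∧ max (δ1 / Y ω) (δ2 / X ω) ≤ ρ}ᶜ =
      ENNReal.ofReal (1
        - Real.exp (-y0 / ΩY) * Real.exp (-lam1 / ΩX)
        - Real.exp (-lam2 * (1 / ΩY + δ2 / (δ1 * ΩX)))
        + (δ1 * ΩX / (δ1 * ΩX + δ2 * ΩY)) * Real.exp (-y0 * (1 / ΩY + δ2 / (δ1 * ΩX)))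
        + (δ2 * ΩY / (δ1 * ΩX + δ2 * ΩY)) *
            Real.exp (-lam2 * (1 / ΩY + δ2 / (δ1 * ΩX)))) :=
  stmt_14_general μ X Y hX hY hindep ΩX ΩY δ1 δ2 x0 y0 ρ hΩX hΩY hδ1 hδ2 hx0 hy0 hρ hρge hXdist
    hYdist lam1 lam2 hlam1 hlam2
end
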